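/- arXiv:2502.08293 — 4 statements merged into one kernel-verified Lean document; each statement's English description precedes it below -/
import Mathlib

section
/- For a separable state ρ = Σ_k p_k ρ_k^A ⊗ ρ_k^B on ℂ^d ⊗ ℂ^d written in Schmidt operator form ρ = Σ_k λ̃_k Ã_k ⊗ B̃_k with orthonormal Hermitian operator bases {Ã_k}, {B̃_k} and λ̃_k ≥ 0, the CCNR value CCNR(ρ) = Σ_k λ̃_k satisfies CCNR(ρ) ≤ 1. -/
/-!
Pairing `ρ` with `Ã_k ⊗ B̃_k` in the Hilbert–Schmidt product reads off `λ̃_k` from the Schmidt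
form, while the separable form gives `Σ_i p_i a_ik b_ik` with `a_ik = tr(ρ_i^A Ã_k)` and
`b_ik = tr(ρ_i^B B̃_k)`. By Bessel's inequality and the purity bound `tr(σ²) ≤ (tr σ)² = 1` for
a state `σ`, each `a_i` and `b_i` lies in the unit ball of `ℝ^(d²)`, so `Σ_k a_ik b_ik ≤ 1`, and
averaging over `i` with the weights `p_i` gives `Σ_k λ̃_k ≤ 1`.
-/

open Matrix Kronecker ComplexOrder

namespace Matrix

lemma trace_sum_smul_kronecker_mul_kronecker {R L m n : Type*} [CommSemiring R] [Fintype L]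
    [Fintype m] [Fintype n] (c : L → R) (X : L → Matrix m m R) (Y : L → Matrix n n R)
    (A : Matrix m m R) (B : Matrix n n R) :
    ((∑ l, c l • (X l ⊗ₖ Y l)) * (A ⊗ₖ B)).trace = ∑ l, c l * (X l * A).trace * (Y l * B).trace := by
  simp only [Finset.sum_mul, trace_sum, smul_mul_assoc, trace_smul, ← mul_kronecker_mul,
    trace_kronecker, smul_eq_mul, mul_assoc]

variable {n 𝕜 : Type*} [Fintype n] [RCLike 𝕜]

lemma IsHermitian.ofReal_re_trace_mul {X Y : Matrix n n 𝕜} (hX : X.IsHermitian)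
    (hY : Y.IsHermitian) : (RCLike.re (X * Y).trace : 𝕜) = (X * Y).trace := by
  rw [← RCLike.conj_eq_iff_re, ← RCLike.star_def, ← trace_conjTranspose, conjTranspose_mul,
    hX.eq, hY.eq, trace_mul_comm]

lemma IsHermitian.re_trace_mul_self_nonneg {X : Matrix n n 𝕜} (hX : X.IsHermitian) :
    0 ≤ RCLike.re (X * X).trace := by
  have h := (posSemidef_conjTranspose_mul_self X).trace_nonneg
  rw [hX.eq] at h
  exact (RCLike.nonneg_iff.mp h).1

lemma IsHermitian.trace_mul_self [DecidableEq n] {X : Matrix n n 𝕜} (hX : X.IsHermitian) :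
    (X * X).trace = ∑ i, ((hX.eigenvalues i ^ 2 : ℝ) : 𝕜) := by
  have hU (Y : Matrix n n 𝕜) :
      star (hX.eigenvectorUnitary : Matrix n n 𝕜) * (hX.eigenvectorUnitary * Y) = Y := by
    rw [← mul_assoc, Unitary.coe_star_mul_self, one_mul]
  conv_lhs => rw [hX.spectral_theorem, Unitary.conjStarAlgAut_apply]
  simp only [mul_assoc, hU]
  rw [trace_mul_comm, mul_assoc, mul_assoc, Unitary.coe_star_mul_self, mul_one,
    diagonal_mul_diagonal, trace_diagonal]
  simp [sq]

lemma PosSemidef.re_trace_mul_self_le {X : Matrix n n 𝕜} (hX : X.PosSemidef) :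
    RCLike.re (X * X).trace ≤ RCLike.re X.trace ^ 2 := by
  classical
  rw [hX.1.trace_mul_self, hX.1.trace_eq_sum_eigenvalues]
  simp only [map_sum, RCLike.ofReal_re]
  exact Finset.sum_sq_le_sq_sum_of_nonneg fun i _ => hX.eigenvalues_nonneg i

section Bessel

variable {K : Type*} [Fintype K] [DecidableEq K] {A : K → Matrix n n 𝕜}

lemma IsHermitian.sum_sq_re_trace_mul_le (hA : ∀ k, (A k).IsHermitian)
    (hAon : ∀ k l, (A k * A l).trace = if k = l then 1 else 0)
    {X : Matrix n n 𝕜} (hX : X.IsHermitian) :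
    ∑ k, RCLike.re (X * A k).trace ^ 2 ≤ RCLike.re (X * X).trace := by
  set c : K → ℝ := fun k => RCLike.re (X * A k).trace
  -- `M` is `X` minus its orthogonal projection onto the span of the `A k`.
  set M := X - ∑ k, c k • A k
  have hM : M.IsHermitian :=
    hX.sub (isSelfAdjoint_sum _ fun k _ => (IsSelfAdjoint.all (c k)).smul (hA k))
  have hMM : RCLike.re (M * M).trace = RCLike.re (X * X).trace - ∑ k, c k ^ 2 := by
    simp only [M, sub_mul, mul_sub, Finset.sum_mul, Finset.mul_sum, smul_mul_assoc,
      mul_smul_comm, trace_sub, trace_sum, trace_smul, hAon, map_sub, map_sum, RCLike.smul_re,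
      trace_mul_comm (A _) X, apply_ite RCLike.re, RCLike.one_re, map_zero, mul_ite, mul_one,
      mul_zero, Finset.sum_ite_eq', Finset.mem_univ, if_true]
    simp [c, sq]
  linarith [hM.re_trace_mul_self_nonneg]

lemma PosSemidef.sum_sq_re_trace_mul_le_one (hA : ∀ k, (A k).IsHermitian)
    (hAon : ∀ k l, (A k * A l).trace = if k = l then 1 else 0)
    {X : Matrix n n 𝕜} (hX : X.PosSemidef) (hX₁ : X.trace = 1) :
    ∑ k, RCLike.re (X * A k).trace ^ 2 ≤ 1 :=
  calc ∑ k, RCLike.re (X * A k).trace ^ 2 ≤ RCLike.re (X * X).trace :=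
        hX.1.sum_sq_re_trace_mul_le hA hAon
    _ ≤ RCLike.re X.trace ^ 2 := hX.re_trace_mul_self_le
    _ = 1 := by simp [hX₁]

end Bessel

end Matrix

lemma Finset.sum_mul_le_one_of_sum_sq_le_one {ι : Type*} {s : Finset ι} {a b : ι → ℝ}
    (ha : ∑ i ∈ s, a i ^ 2 ≤ 1) (hb : ∑ i ∈ s, b i ^ 2 ≤ 1) : ∑ i ∈ s, a i * b i ≤ 1 := by
  have h := Finset.sum_le_sum fun i (_ : i ∈ s) => two_mul_le_add_sq (a i) (b i)
  simp only [Finset.sum_add_distrib, mul_assoc, ← Finset.mul_sum] at h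
  linarith

theorem ccnr_criterion_separable_general (d : ℕ) (ι : Type) [Fintype ι]
    (p : ι → ℝ) (hp : ∀ i, 0 ≤ p i) (hps : ∑ i, p i = 1)
    (ρA ρB : ι → Matrix (Fin d) (Fin d) ℂ)
    (hρA : ∀ i, (ρA i).PosSemidef ∧ (ρA i).trace = 1)
    (hρB : ∀ i, (ρB i).PosSemidef ∧ (ρB i).trace = 1)
    (ρ : Matrix (Fin d × Fin d) (Fin d × Fin d) ℂ)
    (hρ : ρ = ∑ i, (p i : ℂ) • (ρA i ⊗ₖ ρB i))
    (At Bt : Fin (d^2) → Matrix (Fin d) (Fin d) ℂ)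
    (hAtHerm : ∀ k, (At k).IsHermitian) (hBtHerm : ∀ k, (Bt k).IsHermitian)
    (hAtOn : ∀ k l, (At k * At l).trace = if k = l then 1 else 0)
    (hBtOn : ∀ k l, (Bt k * Bt l).trace = if k = l then 1 else 0)
    (lam : Fin (d^2) → ℝ)
    (hSchmidt : ρ = ∑ k, (lam k : ℂ) • (At k ⊗ₖ Bt k)) :
    ∑ k, lam k ≤ 1 := by
  set a : ι → Fin (d^2) → ℝ := fun i k => (ρA i * At k).trace.re
  set b : ι → Fin (d^2) → ℝ := fun i k => (ρB i * Bt k).trace.re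
  have hlam (k : Fin (d^2)) : lam k = ∑ i, p i * (a i k * b i k) := by
    have ha (i : ι) : (ρA i * At k).trace = a i k :=
      ((hρA i).1.1.ofReal_re_trace_mul (hAtHerm k)).symm
    have hb (i : ι) : (ρB i * Bt k).trace = b i k :=
      ((hρB i).1.1.ofReal_re_trace_mul (hBtHerm k)).symm
    have h := congrArg (fun M => (M * (At k ⊗ₖ Bt k)).trace) (hSchmidt.symm.trans hρ)
    simp only [trace_sum_smul_kronecker_mul_kronecker, hAtOn, hBtOn, ha, hb, mul_ite, mul_one,
      mul_zero, Finset.sum_ite_eq', Finset.mem_univ, if_true, mul_assoc] at h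
    exact_mod_cast h
  calc ∑ k, lam k = ∑ i, p i * ∑ k, a i k * b i k := by
        simp only [hlam, Finset.mul_sum]
        exact Finset.sum_comm
    _ ≤ ∑ i, p i * 1 := by
        gcongr with i
        · exact hp i
        · exact Finset.sum_mul_le_one_of_sum_sq_le_one
            ((hρA i).1.sum_sq_re_trace_mul_le_one hAtHerm hAtOn (hρA i).2)
            ((hρB i).1.sum_sq_re_trace_mul_le_one hBtHerm hBtOn (hρB i).2)
    _ = 1 := by simp [hps]

/-- CCNR criterion for separable states: if `ρ` on `ℂ^d ⊗ ℂ^d` is separable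
(a convex combination of product density matrices) and is written in Schmidt operator
form `ρ = Σ_k λ̃_k Ã_k ⊗ B̃_k` with orthonormal Hermitian operator bases and `λ̃_k ≥ 0`,
then `CCNR(ρ) = Σ_k λ̃_k ≤ 1`. -/
theorem ccnr_criterion_separable (d : ℕ) (ι : Type) [Fintype ι]
    (p : ι → ℝ) (hp : ∀ i, 0 ≤ p i) (hps : ∑ i, p i = 1)
    (ρA ρB : ι → Matrix (Fin d) (Fin d) ℂ)
    (hρA : ∀ i, (ρA i).PosSemidef ∧ (ρA i).trace = 1)
    (hρB : ∀ i, (ρB i).PosSemidef ∧ (ρB i).trace = 1)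
    (ρ : Matrix (Fin d × Fin d) (Fin d × Fin d) ℂ)
    (hρ : ρ = ∑ i, (p i : ℂ) • (ρA i ⊗ₖ ρB i))
    (At Bt : Fin (d^2) → Matrix (Fin d) (Fin d) ℂ)
    (hAtHerm : ∀ k, (At k).IsHermitian) (hBtHerm : ∀ k, (Bt k).IsHermitian)
    (hAtOn : ∀ k l, (At k * At l).trace = if k = l then 1 else 0)
    (hBtOn : ∀ k l, (Bt k * Bt l).trace = if k = l then 1 else 0)
    (lam : Fin (d^2) → ℝ) (hlam : ∀ k, 0 ≤ lam k)
    (hSchmidt : ρ = ∑ k, (lam k : ℂ) • (At k ⊗ₖ Bt k)) :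
    ∑ k, lam k ≤ 1 :=
  ccnr_criterion_separable_general d ι p hp hps ρA ρB hρA hρB ρ hρ At Bt hAtHerm hBtHerm hAtOn hBtOn
    lam hSchmidt
end

section
/- (Trace criterion) Let ρ be a separable state on ℂ⁴ ⊗ ℂ⁴ with correlation coefficients t_{kk} = Tr(ρ (A_k ⊗ B_k)), where {A_k}_{k=1}^{16} and {B_k}_{k=1}^{16} are each orthonormal Hermitian operator bases of 4×4 matrices. Then S(ρ) = Σ_{k=1}^{16} |t_{kk}| ≤ 1. -/
open Matrix Kronecker ComplexOrder

/-! For a product state `X ⊗ Y`, `Tr((X ⊗ Y)(A_k ⊗ B_k)) = Tr(X A_k) Tr(Y B_k)`. Bessel's inequality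
for the Hilbert–Schmidt inner product gives `∑_k |Tr(X A_k)|² ≤ Tr(X²) ≤ (Tr X)² = 1`, and likewise
for `Y`, so by AM–GM `∑_k |Tr(X A_k) Tr(Y B_k)| ≤ 1`. A separable state is a convex combination of
product states, and the triangle inequality passes the bound to it. -/

namespace Matrix

variable {n : Type*} [Fintype n] [DecidableEq n]

lemma IsHermitian.trace_mul_self_s7 {A : Matrix n n ℂ} (hA : A.IsHermitian) :
    (A * A).trace = ∑ i, ((hA.eigenvalues i ^ 2 : ℝ) : ℂ) := by
  conv_lhs => rw [hA.spectral_theorem, ← map_mul, diagonal_mul_diagonal,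
    Unitary.conjStarAlgAut_apply, trace_mul_cycle, Unitary.coe_star_mul_self, one_mul,
    trace_diagonal]
  simp [sq]

lemma PosSemidef.re_trace_mul_self_le_s7 {A : Matrix n n ℂ} (hA : A.PosSemidef) :
    (A * A).trace.re ≤ A.trace.re ^ 2 := by
  rw [hA.1.trace_mul_self_s7, hA.1.trace_eq_sum_eigenvalues]
  simp only [Complex.re_sum, Complex.ofReal_re]
  exact Finset.sum_sq_le_sq_sum_of_nonneg fun i _ => hA.eigenvalues_nonneg i

lemma sum_norm_trace_mul_sq_le {κ : Type*} [Fintype κ] [DecidableEq κ] {A : κ → Matrix n n ℂ}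
    (hA : ∀ k, (A k).IsHermitian) (hAA : ∀ k l, (A k * A l).trace = if k = l then 1 else 0)
    (X : Matrix n n ℂ) : ∑ k, ‖(X * A k).trace‖ ^ 2 ≤ (X * Xᴴ).trace.re := by
  -- the Hilbert–Schmidt inner product `⟪Y, Z⟫ = Tr(Z Yᴴ)`
  let _ := toMatrixSeminormedAddCommGroup (1 : Matrix n n ℂ) PosSemidef.one
  let _ := toMatrixInnerProductSpace (1 : Matrix n n ℂ) PosSemidef.one
  have hinner : ∀ Y Z : Matrix n n ℂ, inner ℂ Y Z = (Z * Yᴴ).trace := fun Y Z => by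
    change (Z * 1 * Yᴴ).trace = _
    rw [Matrix.mul_one]
  have hON : Orthonormal ℂ A := by
    rw [orthonormal_iff_ite]
    intro k l
    rw [hinner, (hA k).eq, hAA]
    exact if_congr eq_comm rfl rfl
  calc ∑ k, ‖(X * A k).trace‖ ^ 2 = ∑ k, ‖inner ℂ (A k) X‖ ^ 2 := by
        simp only [hinner, (hA _).eq]
    _ ≤ ‖X‖ ^ 2 := hON.sum_inner_products_le X
    _ = (X * Xᴴ).trace.re := by rw [norm_sq_eq_re_inner (𝕜 := ℂ), hinner]; rfl

lemma PosSemidef.sum_norm_trace_mul_sq_le_one {κ : Type*} [Fintype κ] [DecidableEq κ]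
    {X : Matrix n n ℂ} (hX : X.PosSemidef) (hX1 : X.trace = 1) {A : κ → Matrix n n ℂ}
    (hA : ∀ k, (A k).IsHermitian) (hAA : ∀ k l, (A k * A l).trace = if k = l then 1 else 0) :
    ∑ k, ‖(X * A k).trace‖ ^ 2 ≤ 1 := by
  calc ∑ k, ‖(X * A k).trace‖ ^ 2 ≤ (X * Xᴴ).trace.re := sum_norm_trace_mul_sq_le hA hAA X
    _ ≤ X.trace.re ^ 2 := by rw [hX.1.eq]; exact hX.re_trace_mul_self_le_s7
    _ = 1 := by simp [hX1]

end Matrix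

lemma trace_kronecker_mul_kronecker {R m n : Type*} [CommSemiring R] [Fintype m] [Fintype n]
    (X A : Matrix m m R) (Y B : Matrix n n R) :
    ((X ⊗ₖ Y) * (A ⊗ₖ B)).trace = (X * A).trace * (Y * B).trace := by
  rw [← mul_kronecker_mul, trace_kronecker]

lemma sum_norm_trace_sum_smul_mul_le {ι κ N : Type*} [Fintype ι] [Fintype κ] [Fintype N]
    {p : ι → ℝ} (hp : ∀ i, 0 ≤ p i) (σ : ι → Matrix N N ℂ) (M : κ → Matrix N N ℂ) :
    ∑ k, ‖((∑ i, (p i : ℂ) • σ i) * M k).trace‖ ≤ ∑ i, p i * ∑ k, ‖(σ i * M k).trace‖ := by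
  calc ∑ k, ‖((∑ i, (p i : ℂ) • σ i) * M k).trace‖
        = ∑ k, ‖∑ i, (p i : ℂ) * (σ i * M k).trace‖ := by
          simp only [Finset.sum_mul, trace_sum, smul_mul, trace_smul, smul_eq_mul]
    _ ≤ ∑ k, ∑ i, p i * ‖(σ i * M k).trace‖ := Finset.sum_le_sum fun k _ =>
          (norm_sum_le _ _).trans_eq <| by simp only [norm_mul, Complex.norm_real,
            Real.norm_of_nonneg (hp _)]
    _ = ∑ i, p i * ∑ k, ‖(σ i * M k).trace‖ := by
          rw [Finset.sum_comm]; simp only [Finset.mul_sum]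

lemma sum_norm_trace_mul_kronecker_le_one {m n κ : Type*} [Fintype m] [DecidableEq m]
    [Fintype n] [DecidableEq n] [Fintype κ] [DecidableEq κ]
    {X : Matrix m m ℂ} (hX : X.PosSemidef) (hX1 : X.trace = 1)
    {Y : Matrix n n ℂ} (hY : Y.PosSemidef) (hY1 : Y.trace = 1)
    {A : κ → Matrix m m ℂ} (hA : ∀ k, (A k).IsHermitian)
    (hAA : ∀ k l, (A k * A l).trace = if k = l then 1 else 0)
    {B : κ → Matrix n n ℂ} (hB : ∀ k, (B k).IsHermitian)
    (hBB : ∀ k l, (B k * B l).trace = if k = l then 1 else 0) :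
    ∑ k, ‖((X ⊗ₖ Y) * (A k ⊗ₖ B k)).trace‖ ≤ 1 := by
  have hXA := hX.sum_norm_trace_mul_sq_le_one hX1 hA hAA
  have hYB := hY.sum_norm_trace_mul_sq_le_one hY1 hB hBB
  calc ∑ k, ‖((X ⊗ₖ Y) * (A k ⊗ₖ B k)).trace‖
        = ∑ k, ‖(X * A k).trace‖ * ‖(Y * B k).trace‖ := by
          simp only [trace_kronecker_mul_kronecker, norm_mul]
    _ ≤ ∑ k, (‖(X * A k).trace‖ ^ 2 + ‖(Y * B k).trace‖ ^ 2) / 2 :=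
          Finset.sum_le_sum fun k _ => by
            linarith [two_mul_le_add_sq ‖(X * A k).trace‖ ‖(Y * B k).trace‖]
    _ ≤ 1 := by rw [← Finset.sum_div, Finset.sum_add_distrib]; linarith

/-- Trace criterion: for a separable state `ρ` on `ℂ⁴ ⊗ ℂ⁴` and orthonormal Hermitian
operator bases `{A_k}`, `{B_k}` of the 4×4 matrices, the diagonal correlation
coefficients `t_{kk} = Tr(ρ (A_k ⊗ B_k))` satisfy `S(ρ) = Σ_k |t_{kk}| ≤ 1`. -/
theorem trace_criterion_separable (ι : Type) [Fintype ι]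
    (p : ι → ℝ) (hp : ∀ i, 0 ≤ p i) (hps : ∑ i, p i = 1)
    (ρA ρB : ι → Matrix (Fin 4) (Fin 4) ℂ)
    (hρA : ∀ i, (ρA i).PosSemidef ∧ (ρA i).trace = 1)
    (hρB : ∀ i, (ρB i).PosSemidef ∧ (ρB i).trace = 1)
    (ρ : Matrix (Fin 4 × Fin 4) (Fin 4 × Fin 4) ℂ)
    (hρ : ρ = ∑ i, (p i : ℂ) • (ρA i ⊗ₖ ρB i))
    (Ab Bb : Fin 16 → Matrix (Fin 4) (Fin 4) ℂ)
    (hAbHerm : ∀ k, (Ab k).IsHermitian) (hBbHerm : ∀ k, (Bb k).IsHermitian)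
    (hAbOn : ∀ k l, (Ab k * Ab l).trace = if k = l then 1 else 0)
    (hBbOn : ∀ k l, (Bb k * Bb l).trace = if k = l then 1 else 0) :
    ∑ k : Fin 16, ‖(ρ * (Ab k ⊗ₖ Bb k)).trace‖ ≤ 1 := by
  subst hρ
  calc _ ≤ ∑ i, p i * ∑ k, ‖((ρA i ⊗ₖ ρB i) * (Ab k ⊗ₖ Bb k)).trace‖ :=
        sum_norm_trace_sum_smul_mul_le hp _ _
    _ ≤ ∑ i, p i * 1 := Finset.sum_le_sum fun i _ => mul_le_mul_of_nonneg_left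
        (sum_norm_trace_mul_kronecker_le_one (hρA i).1 (hρA i).2 (hρB i).1 (hρB i).2
          hAbHerm hAbOn hBbHerm hBbOn) (hp i)
    _ = 1 := by simp [hps]
end

section
/- Separable lower bound Q_sep^M = 4³ is valid as an upper bound for the fixed-measurement strategy: for any 4×4 density matrices {ρ_x^A}_{x=1}^{16}, {ρ_y^B}_{y=1}^{16}, the quantity Σ_{x,y,z} H_{xyz} Tr(2A_z ρ_x^A) Tr(2A_z ρ_y^B), with H_{xyz} = Tr((A_z A_x)²) Tr((A_z A_y)²), is at most 4³ = 64. -/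
open Matrix Kronecker

/-- The Pauli matrices: `σp 0 = I`, `σp 1 = X`, `σp 2 = Y`, `σp 3 = Z`. -/
noncomputable def σp : Fin 4 → Matrix (Fin 2) (Fin 2) ℂ
  | 0 => 1
  | 1 => !![0, 1; 1, 0]
  | 2 => !![0, -Complex.I; Complex.I, 0]
  | 3 => !![1, 0; 0, -1]

/-- The normalized Pauli products `A_k = (1/2) σ_{k₀} ⊗ σ_{k₁}`, viewed as 4×4 matrices. -/
noncomputable def Ap (k : Fin 4 × Fin 4) : Matrix (Fin 2 × Fin 2) (Fin 2 × Fin 2) ℂ :=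
  (1/2 : ℂ) • (σp k.1 ⊗ₖ σp k.2)

/-!
Two Pauli products either commute or anticommute, so `(A_z A_x)² = ±(1/16) I`, whence
`|Tr((A_z A_x)²)| = 1/4` and every coefficient `H_{xyz}` has modulus `1/16`. The `A_z` are orthonormal for the Hilbert–Schmidt inner product, so
by Bessel's inequality `∑_z |Tr(A_z ρ)|² ≤ Tr(ρ²) ≤ (Tr ρ)² = 1` for a density matrix `ρ`. Hence
for fixed `x, y` the sum over `z` is at most `(1/16) ∑_z |Tr(2A_z ρ_x)| |Tr(2A_z ρ_y)| ≤ 1/4`, and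
the `16²` pairs `(x, y)` contribute at most `64`.
-/

open ComplexOrder

section TraceInequalities

variable {𝕜 n : Type*} [RCLike 𝕜] [Fintype n] [DecidableEq n]

/-- Bessel's inequality for a family orthonormal in the Hilbert–Schmidt inner product
`⟪X, Y⟫ = Tr(Y Xᴴ)`. -/
theorem Matrix.sum_norm_trace_mul_conjTranspose_sq_le {ι : Type*} [Fintype ι] [DecidableEq ι]
    (A : ι → Matrix n n 𝕜) (hA : ∀ i j, (A j * (A i)ᴴ).trace = if i = j then 1 else 0)
    (ρ : Matrix n n 𝕜) :
    ∑ i, ‖(ρ * (A i)ᴴ).trace‖ ^ 2 ≤ RCLike.re (ρ * ρᴴ).trace := by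
  let _ := toMatrixSeminormedAddCommGroup (1 : Matrix n n 𝕜) PosSemidef.one
  let _ := toMatrixInnerProductSpace (1 : Matrix n n 𝕜) PosSemidef.one
  have inner_eq : ∀ X Y : Matrix n n 𝕜, inner 𝕜 X Y = (Y * Xᴴ).trace := fun X Y => by
    change (Y * 1 * Xᴴ).trace = _
    rw [Matrix.mul_one]
  have hA_orthonormal : Orthonormal 𝕜 A :=
    orthonormal_iff_ite.mpr fun i j => by rw [inner_eq, hA]
  have bessel := hA_orthonormal.sum_inner_products_le ρ (s := Finset.univ)
  simp only [inner_eq] at bessel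
  rwa [← inner_self_eq_norm_sq (𝕜 := 𝕜), inner_eq] at bessel

theorem Matrix.PosSemidef.re_trace_mul_self_le_s9 {A : Matrix n n 𝕜} (hA : A.PosSemidef) :
    RCLike.re (A * A).trace ≤ RCLike.re A.trace ^ 2 := by
  have trace_sq : (A * A).trace = ∑ i, ((hA.1.eigenvalues i ^ 2 : ℝ) : 𝕜) := by
    conv_lhs => rw [hA.1.spectral_theorem, ← map_mul, Unitary.conjStarAlgAut_apply,
      trace_mul_cycle, Unitary.coe_star_mul_self, one_mul, diagonal_mul_diagonal, trace_diagonal]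
    simp [sq]
  rw [trace_sq, hA.1.trace_eq_sum_eigenvalues]
  simp only [map_sum, RCLike.ofReal_re]
  exact Finset.sum_sq_le_sq_sum_of_nonneg fun i _ => hA.eigenvalues_nonneg i

end TraceInequalities

theorem Finset.sum_mul_le_of_sum_sq_le {ι : Type*} (s : Finset ι) (f g : ι → ℝ) {r : ℝ}
    (hf : ∑ i ∈ s, f i ^ 2 ≤ r) (hg : ∑ i ∈ s, g i ^ 2 ≤ r) : ∑ i ∈ s, f i * g i ≤ r := by
  have amgm : ∑ i ∈ s, 2 * (f i * g i) ≤ ∑ i ∈ s, (f i ^ 2 + g i ^ 2) :=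
    Finset.sum_le_sum fun i _ => by rw [← mul_assoc]; exact two_mul_le_add_sq _ _
  rw [← Finset.mul_sum, Finset.sum_add_distrib] at amgm
  linarith

theorem σp_conjTranspose (a : Fin 4) : (σp a)ᴴ = σp a := by
  fin_cases a <;> simp [σp] <;>
    ext i j <;> fin_cases i <;> fin_cases j <;> simp [conjTranspose_apply]

theorem trace_σp_mul_σp (a b : Fin 4) : (σp a * σp b).trace = if a = b then 2 else 0 := by
  fin_cases a <;> fin_cases b <;> simp [σp, Matrix.one_fin_two, Matrix.trace_fin_two] <;> norm_num

theorem norm_trace_σp_mul_σp_sq (a b : Fin 4) : ‖(σp a * σp b * (σp a * σp b)).trace‖ = 2 := by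
  fin_cases a <;> fin_cases b <;> simp [σp, Matrix.one_fin_two, Matrix.trace_fin_two] <;> norm_num

theorem Ap_conjTranspose (z : Fin 4 × Fin 4) : (Ap z)ᴴ = Ap z := by
  simp [Ap, conjTranspose_smul, conjTranspose_kronecker, σp_conjTranspose]

theorem Ap_mul_Ap (z w : Fin 4 × Fin 4) :
    Ap z * Ap w = (1/4 : ℂ) • ((σp z.1 * σp w.1) ⊗ₖ (σp z.2 * σp w.2)) := by
  rw [Ap, Ap, smul_mul_smul_comm, ← mul_kronecker_mul]
  norm_num

theorem trace_Ap_mul_Ap (z w : Fin 4 × Fin 4) : (Ap z * Ap w).trace = if z = w then 1 else 0 := by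
  rw [Ap_mul_Ap, trace_smul, trace_kronecker, trace_σp_mul_σp, trace_σp_mul_σp,
    ite_zero_mul_ite_zero]
  simp only [← Prod.ext_iff]
  split_ifs <;> norm_num

theorem norm_trace_Ap_mul_Ap_sq (z w : Fin 4 × Fin 4) :
    ‖(Ap z * Ap w * (Ap z * Ap w)).trace‖ = 1/4 := by
  rw [Ap_mul_Ap, smul_mul_smul_comm, ← mul_kronecker_mul, trace_smul, trace_kronecker,
    smul_eq_mul, norm_mul, norm_mul, norm_mul, norm_trace_σp_mul_σp_sq, norm_trace_σp_mul_σp_sq]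
  norm_num

theorem sum_norm_trace_two_Ap_mul_sq_le {ρ : Matrix (Fin 2 × Fin 2) (Fin 2 × Fin 2) ℂ}
    (hρ : ρ.PosSemidef) (hρ_trace : ρ.trace = 1) :
    ∑ z, ‖((2 : ℂ) • Ap z * ρ).trace‖ ^ 2 ≤ 4 := by
  have Ap_orthonormal : ∀ z w, (Ap w * (Ap z)ᴴ).trace = if z = w then 1 else 0 := fun z w => by
    rw [Ap_conjTranspose, trace_Ap_mul_Ap]; exact if_congr eq_comm rfl rfl
  calc ∑ z, ‖((2 : ℂ) • Ap z * ρ).trace‖ ^ 2 = 4 * ∑ z, ‖(ρ * (Ap z)ᴴ).trace‖ ^ 2 := by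
        rw [Finset.mul_sum]
        congr with z
        rw [smul_mul_assoc, trace_smul, trace_mul_comm, Ap_conjTranspose, norm_smul]
        norm_num [mul_pow]
    _ ≤ 4 * RCLike.re (ρ * ρᴴ).trace := by
        gcongr; exact sum_norm_trace_mul_conjTranspose_sq_le Ap Ap_orthonormal ρ
    _ ≤ 4 * RCLike.re ρ.trace ^ 2 := by
        rw [hρ.1.eq]; gcongr; exact hρ.re_trace_mul_self_le_s9
    _ = 4 := by simp [hρ_trace]

/-- Separable upper bound for the fixed-measurement strategy: for any families of
four-dimensional density matrices `{ρ_x^A}` and `{ρ_y^B}`, the quantity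
`Σ_{x,y,z} H_{xyz} Tr(2A_z ρ_x^A) Tr(2A_z ρ_y^B)` with
`H_{xyz} = Tr((A_z A_x)²) Tr((A_z A_y)²)` is at most `4³ = 64`. -/
theorem separable_bound_fixed_measurements
    (ρA ρB : (Fin 4 × Fin 4) → Matrix (Fin 2 × Fin 2) (Fin 2 × Fin 2) ℂ)
    (hρA : ∀ x, (ρA x).PosSemidef ∧ (ρA x).trace = 1)
    (hρB : ∀ y, (ρB y).PosSemidef ∧ (ρB y).trace = 1) :
    (∑ x : Fin 4 × Fin 4, ∑ y : Fin 4 × Fin 4, ∑ z : Fin 4 × Fin 4,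
        ((Ap z * Ap x) * (Ap z * Ap x)).trace * ((Ap z * Ap y) * (Ap z * Ap y)).trace
          * (((2:ℂ) • Ap z) * ρA x).trace * (((2:ℂ) • Ap z) * ρB y).trace).re ≤ 64 := by
  set a := fun x z => ‖((2 : ℂ) • Ap z * ρA x).trace‖
  set b := fun y z => ‖((2 : ℂ) • Ap z * ρB y).trace‖
  have inner_le : ∀ x y, ∑ z, a x z * b y z ≤ 4 := fun x y =>
    Finset.univ.sum_mul_le_of_sum_sq_le _ _
      (sum_norm_trace_two_Ap_mul_sq_le (hρA x).1 (hρA x).2)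
      (sum_norm_trace_two_Ap_mul_sq_le (hρB y).1 (hρB y).2)
  calc _ ≤ ∑ x, ∑ y, ∑ z, (1/16) * (a x z * b y z) := by
        simp only [Complex.re_sum]
        refine Finset.sum_le_sum fun x _ => Finset.sum_le_sum fun y _ =>
          Finset.sum_le_sum fun z _ => (Complex.re_le_norm _).trans_eq ?_
        simp only [norm_mul, norm_trace_Ap_mul_Ap_sq, a, b]
        ring
    _ ≤ ∑ _x : Fin 4 × Fin 4, ∑ _y : Fin 4 × Fin 4, (1/4 : ℝ) := by
        refine Finset.sum_le_sum fun x _ => Finset.sum_le_sum fun y _ => ?_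
        rw [← Finset.mul_sum]
        linarith [inner_le x y]
    _ = 64 := by norm_num
end

section
/- The normalized antisymmetric projector ρ_as = P_as/6 on ℂ⁴ ⊗ ℂ⁴, where P_as = (I₁₆ − V)/2 with V the swap operator, has Bloch-diagonal coefficients λ_1 = 1/4 and λ_k = −1/12 for k = 2,…,16; hence its CCNR value equals 1/4 + 15·(1/12) = 3/2. -/
/-! Since `Tr(V (A ⊗ B)) = Tr(A B)`, every coefficient is `λ_k = (Tr(A_k)² − Tr(A_k²)) / 12`.
The Pauli products square to `I/4`, so `Tr(A_k²) = 1`, and all of them except `A_{(0,0)} = I/2`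
are traceless, which gives `λ = (4 − 1)/12` at `(0,0)` and `λ = −1/12` elsewhere. -/

open Matrix Kronecker

/-- The swap operator `V = Σ_{i,j} |ji⟩⟨ij|` on `ℂ⁴ ⊗ ℂ⁴`. -/
noncomputable def swapV :
    Matrix ((Fin 2 × Fin 2) × (Fin 2 × Fin 2)) ((Fin 2 × Fin 2) × (Fin 2 × Fin 2)) ℂ :=
  fun p q => if p.1 = q.2 ∧ p.2 = q.1 then 1 else 0

/-- The normalized antisymmetric projector `ρ_as = P_as/6`, `P_as = (I − V)/2`. -/
noncomputable def rhoAS :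
    Matrix ((Fin 2 × Fin 2) × (Fin 2 × Fin 2)) ((Fin 2 × Fin 2) × (Fin 2 × Fin 2)) ℂ :=
  (1/6 : ℂ) • ((1/2 : ℂ) • ((1 : Matrix ((Fin 2 × Fin 2) × (Fin 2 × Fin 2))
    ((Fin 2 × Fin 2) × (Fin 2 × Fin 2)) ℂ) - swapV))

lemma swapV_mul_apply (M : Matrix ((Fin 2 × Fin 2) × (Fin 2 × Fin 2))
    ((Fin 2 × Fin 2) × (Fin 2 × Fin 2)) ℂ) (p q) :
    (swapV * M) p q = M p.swap q := by
  simp [swapV, mul_apply, Fintype.sum_prod_type, ite_and, Prod.swap]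

lemma trace_swapV_mul_kronecker (A B : Matrix (Fin 2 × Fin 2) (Fin 2 × Fin 2) ℂ) :
    (swapV * (A ⊗ₖ B)).trace = (A * B).trace := by
  calc (swapV * (A ⊗ₖ B)).trace
        = ∑ p : (Fin 2 × Fin 2) × (Fin 2 × Fin 2), A p.2 p.1 * B p.1 p.2 := by
        simp only [trace, diag_apply, swapV_mul_apply, Prod.fst_swap, Prod.snd_swap,
          kroneckerMap_apply]
    _ = (A * B).trace := by
        rw [Fintype.sum_prod_type, Finset.sum_comm]
        simp only [trace, diag_apply, mul_apply]

lemma trace_rhoAS_mul_kronecker (A B : Matrix (Fin 2 × Fin 2) (Fin 2 × Fin 2) ℂ) :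
    (rhoAS * (A ⊗ₖ B)).trace = (A.trace * B.trace - (A * B).trace) / 12 := by
  simp only [rhoAS, smul_mul, sub_mul, one_mul, trace_smul, trace_sub, trace_kronecker,
    trace_swapV_mul_kronecker, smul_eq_mul]
  ring

lemma σp_mul_self (i : Fin 4) : σp i * σp i = 1 := by
  fin_cases i <;> ext a b <;> fin_cases a <;> fin_cases b <;> simp [σp]

lemma trace_σp (i : Fin 4) : (σp i).trace = if i = 0 then 2 else 0 := by
  fin_cases i <;> simp [σp, trace, Fin.sum_univ_two]

lemma trace_Ap (k : Fin 4 × Fin 4) : (Ap k).trace = if k = (0, 0) then 2 else 0 := by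
  obtain ⟨i, j⟩ := k
  by_cases hi : i = 0 <;> by_cases hj : j = 0 <;>
    simp [Ap, trace_kronecker, trace_σp, hi, hj]

lemma trace_Ap_mul_self (k : Fin 4 × Fin 4) : (Ap k * Ap k).trace = 1 := by
  simp only [Ap, smul_mul_smul_comm, ← mul_kronecker_mul, σp_mul_self, trace_smul,
    trace_kronecker, trace_one, Fintype.card_fin, smul_eq_mul]
  norm_num

lemma trace_rhoAS_mul_Ap_kronecker_Ap (k : Fin 4 × Fin 4) :
    (rhoAS * (Ap k ⊗ₖ Ap k)).trace = if k = (0, 0) then 1/4 else -1/12 := by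
  rw [trace_rhoAS_mul_kronecker, trace_Ap_mul_self, trace_Ap]
  split_ifs <;> norm_num

/-- The antisymmetric Werner state `ρ_as = P_as/6` on `ℂ⁴ ⊗ ℂ⁴` has Bloch-diagonal
coefficients `λ₁ = 1/4` and `λ_k = −1/12` otherwise; its CCNR value is `3/2`. -/
theorem antisymmetric_werner_ccnr :
    (∀ k : Fin 4 × Fin 4, (rhoAS * (Ap k ⊗ₖ Ap k)).trace
        = if k = (0, 0) then (1/4 : ℂ) else (-1/12 : ℂ)) ∧
    ∑ k : Fin 4 × Fin 4, ‖(rhoAS * (Ap k ⊗ₖ Ap k)).trace‖ = 3/2 := by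
  refine ⟨trace_rhoAS_mul_Ap_kronecker_Ap, ?_⟩
  simp only [trace_rhoAS_mul_Ap_kronecker_Ap, apply_ite (‖·‖ : ℂ → ℝ)]
  rw [Finset.sum_ite, Finset.sum_const, Finset.sum_const, Finset.filter_eq', Finset.filter_ne',
    Finset.card_erase_of_mem (Finset.mem_univ _)]
  norm_num
end
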